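/- arXiv:2604.05414 — 2 statements merged into one kernel-verified Lean document; each statement's English description precedes it below -/
import Mathlib

section
/- For the linear map L : P ↦ Φ with Φ_ij = (P_ji − P_ij)/(s_i + s_j), the operator norm (with respect to Frobenius norms) equals 2/(s_2 + s_3), where s_1 ≥ s_2 ≥ s_3 > 0. -/
/-!
With the paper's 1-based indices: off the diagonal `sᵢ + sⱼ ≥ s₂ + s₃`, so
`Φᵢⱼ² ≤ (Pⱼᵢ − Pᵢⱼ)² / (s₂ + s₃)²`, and summing `(a − b)² ≤ 2(a² + b²)` over all entries gives `‖Φ‖² ≤ 4‖P‖² / (s₂ + s₃)²`.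
The bound is attained at the antisymmetric `P = E₂₃ − E₃₂`, which `L` maps to `−2P / (s₂ + s₃)`.
-/

open Matrix BigOperators

/-- Frobenius norm on 3×3 real matrices. -/
noncomputable def fnorm (A : Matrix (Fin 3) (Fin 3) ℝ) : ℝ :=
  Real.sqrt (∑ i, ∑ j, A i j ^ 2)

theorem sum_sq_sub_transpose_le {n : Type*} [Fintype n] (P : Matrix n n ℝ) :
    ∑ i, ∑ j, (P j i - P i j) ^ 2 ≤ 4 * ∑ i, ∑ j, P i j ^ 2 :=
  calc ∑ i, ∑ j, (P j i - P i j) ^ 2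
      ≤ ∑ i, ∑ j, 2 * (P j i ^ 2 + P i j ^ 2) := by
        gcongr with i _ j _
        nlinarith [sq_nonneg (P j i + P i j)]
    _ = 4 * ∑ i, ∑ j, P i j ^ 2 := by
        simp only [mul_add, Finset.sum_add_distrib, ← Finset.mul_sum]
        rw [Finset.sum_comm]
        ring

/-- The matrix `Φ` of the statement. -/
noncomputable def skewQuotient {n : Type*} [DecidableEq n] (s : n → ℝ) (P : Matrix n n ℝ) :
    Matrix n n ℝ :=
  of fun i j => if i = j then 0 else (P j i - P i j) / (s i + s j)

section skewQuotient

variable {n : Type*} [DecidableEq n]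

theorem sq_skewQuotient_le {s : n → ℝ} {c : ℝ} (hc : 0 < c)
    (hs : ∀ i j, i ≠ j → c ≤ s i + s j) (P : Matrix n n ℝ) (i j : n) :
    skewQuotient s P i j ^ 2 ≤ (P j i - P i j) ^ 2 / c ^ 2 := by
  rw [skewQuotient, of_apply]
  split_ifs with hij
  · simp [hij]
  · rw [div_pow]
    gcongr
    exact hs i j hij

theorem sum_sq_skewQuotient_le [Fintype n] {s : n → ℝ} {c : ℝ} (hc : 0 < c)
    (hs : ∀ i j, i ≠ j → c ≤ s i + s j) (P : Matrix n n ℝ) :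
    ∑ i, ∑ j, skewQuotient s P i j ^ 2 ≤ (2 / c) ^ 2 * ∑ i, ∑ j, P i j ^ 2 :=
  calc ∑ i, ∑ j, skewQuotient s P i j ^ 2
      ≤ ∑ i, ∑ j, (P j i - P i j) ^ 2 / c ^ 2 := by
        gcongr with i _ j _
        exact sq_skewQuotient_le hc hs P i j
    _ = (∑ i, ∑ j, (P j i - P i j) ^ 2) / c ^ 2 := by simp only [Finset.sum_div]
    _ ≤ 4 * (∑ i, ∑ j, P i j ^ 2) / c ^ 2 := by gcongr; exact sum_sq_sub_transpose_le P
    _ = (2 / c) ^ 2 * ∑ i, ∑ j, P i j ^ 2 := by ring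

theorem skewQuotient_eq_smul_of_transpose_eq_neg {s : n → ℝ} {c : ℝ} {P : Matrix n n ℝ}
    (hP : Pᵀ = -P) (hsupp : ∀ i j, P i j ≠ 0 → s i + s j = c) :
    skewQuotient s P = (-2 / c) • P := by
  ext i j
  have hji : P j i = -P i j := by simpa using congrFun (congrFun hP i) j
  by_cases hij : P i j = 0
  · simp [skewQuotient, hji, hij]
  · have hne : i ≠ j := by
      rintro rfl
      exact hij (by linarith)
    simp only [skewQuotient, of_apply, if_neg hne, hji, hsupp i j hij, Matrix.smul_apply,
      smul_eq_mul]
    ring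

end skewQuotient

theorem fnorm_smul (k : ℝ) (A : Matrix (Fin 3) (Fin 3) ℝ) : fnorm (k • A) = |k| * fnorm A := by
  rw [fnorm, fnorm, ← Real.sqrt_sq_eq_abs, ← Real.sqrt_mul (sq_nonneg k)]
  simp only [Matrix.smul_apply, smul_eq_mul, mul_pow, Finset.mul_sum]

theorem fnorm_le_mul_of_sum_sq_le {A B : Matrix (Fin 3) (Fin 3) ℝ} {k : ℝ} (hk : 0 ≤ k)
    (h : ∑ i, ∑ j, A i j ^ 2 ≤ k ^ 2 * ∑ i, ∑ j, B i j ^ 2) : fnorm A ≤ k * fnorm B := by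
  calc fnorm A ≤ Real.sqrt (k ^ 2 * ∑ i, ∑ j, B i j ^ 2) := Real.sqrt_le_sqrt h
    _ = k * fnorm B := by rw [Real.sqrt_mul (sq_nonneg k), Real.sqrt_sq hk, fnorm]

/-- The operator norm (Frobenius-to-Frobenius) of the linear map `L : P ↦ Φ` with
`Φᵢⱼ = (Pⱼᵢ − Pᵢⱼ)/(sᵢ + sⱼ)` for `i ≠ j` and zero diagonal, for
`s₁ ≥ s₂ ≥ s₃ > 0`, equals `2/(s₂ + s₃)`: it is an upper bound of the ratio
`‖L P‖_F/‖P‖_F` and is attained. -/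
theorem svd_jacobian_operator_norm
    (s : Fin 3 → ℝ) (hpos : ∀ i, 0 < s i)
    (hord : s 1 ≤ s 0 ∧ s 2 ≤ s 1)
    (L : Matrix (Fin 3) (Fin 3) ℝ →ₗ[ℝ] Matrix (Fin 3) (Fin 3) ℝ)
    (hL : ∀ P i j, L P i j = if i = j then 0 else (P j i - P i j) / (s i + s j)) :
    (∀ P : Matrix (Fin 3) (Fin 3) ℝ, fnorm (L P) ≤ (2 / (s 1 + s 2)) * fnorm P) ∧
    (∃ P : Matrix (Fin 3) (Fin 3) ℝ, P ≠ 0 ∧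
      fnorm (L P) = (2 / (s 1 + s 2)) * fnorm P) := by
  have hL_eq : ∀ P, L P = skewQuotient s P := fun P => by ext i j; exact hL P i j
  have hc : 0 < s 1 + s 2 := add_pos (hpos 1) (hpos 2)
  have hmin : ∀ i j, i ≠ j → s 1 + s 2 ≤ s i + s j := by
    obtain ⟨h10, h21⟩ := hord
    intro i j hij
    fin_cases i <;> fin_cases j <;> simp at hij ⊢ <;> linarith
  refine ⟨fun P => ?_, ?_⟩
  · rw [hL_eq]
    exact fnorm_le_mul_of_sum_sq_le (by positivity) (sum_sq_skewQuotient_le hc hmin P)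
  · let P : Matrix (Fin 3) (Fin 3) ℝ := of ![![0, 0, 0], ![0, 0, 1], ![0, -1, 0]]
    have hP : Pᵀ = -P := by ext i j; fin_cases i <;> fin_cases j <;> simp [P]
    have hsupp : ∀ i j, P i j ≠ 0 → s i + s j = s 1 + s 2 := by
      intro i j; fin_cases i <;> fin_cases j <;> simp [P, add_comm]
    refine ⟨P, fun h => by simpa [P] using congrFun (congrFun h 1) 2, ?_⟩
    rw [hL_eq, skewQuotient_eq_smul_of_transpose_eq_neg hP hsupp, fnorm_smul, neg_div, abs_neg,
      abs_of_pos (by positivity)]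
end

section
/- Let L⁻ : Matrix (Fin 3) (Fin 3) ℝ → Matrix (Fin 3) (Fin 3) ℝ be the linear map P ↦ Ψ where Ψ_12 = (P_21 − P_12)/(s_1+s_2), Ψ_13 = −(P_13 + P_31)/(s_1+s_3), Ψ_23 = −(P_23 + P_32)/(s_2+s_3), Ψ is antisymmetric in the (1,2) entry pair (Ψ_21 = −Ψ_12) and Ψ_ji = Ψ-determined accordingly, and Ψ_ii = 0, with s_1 > s_2 > s_3 > 0. Then L⁻ has rank 3 and its nonzero singular values are 2/(s_1+s_2), 2/(s_1+s_3), 2/(s_2+s_3), identical to those of the map L of the det > 0 case. -/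
open Matrix BigOperators

/-- Frobenius inner product on 3×3 real matrices. -/
def finner (A B : Matrix (Fin 3) (Fin 3) ℝ) : ℝ := ∑ i, ∑ j, A i j * B i j

/-!
`L⁻` only sees three coordinates of `P`: the antisymmetric combination `P₂₁ − P₁₂` and the
symmetric ones `P₁₃ + P₃₁`, `P₂₃ + P₃₂`. Normalised, these are Frobenius products with an
orthonormal triple `v₁, v₂, v₃`, and `L⁻` sends each `vₖ` to `σₖ uₖ` for a unit skew matrix
`uₖ`, the three `uₖ` again being orthonormal. Hence `L⁻ P = ∑ₖ σₖ ⟨vₖ, P⟩ uₖ` is a singular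
value decomposition, with `σ = (2/(s₁+s₂), 2/(s₁+s₃), 2/(s₂+s₃))`, all nonzero since `s > 0`.
-/

namespace LinearMap

variable {K M ι : Type*} [Field K] [AddCommGroup M] [Module K M]
  {B : M →ₗ[K] M →ₗ[K] K} {σ : ι → K} {v u : ι → M} {L : M →ₗ[K] M}

theorem linearIndependent_of_orthonormal [DecidableEq ι]
    (hu : ∀ k l, B (u k) (u l) = if k = l then 1 else 0) : LinearIndependent K u :=
  linearIndependent_of_isOrthoᵢ (B := B) (isOrthoᵢ_def.2 fun k l hkl => by simp [hu, hkl])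
    (by simp [hu])

theorem map_eq_smul_of_orthonormal [Fintype ι] [DecidableEq ι]
    (hL : ∀ x, L x = ∑ k, (σ k * B (v k) x) • u k)
    (hv : ∀ k l, B (v k) (v l) = if k = l then 1 else 0) (l : ι) : L (v l) = σ l • u l := by
  simp [hL, hv]

theorem map_eq_zero_of_orthogonal [Fintype ι]
    (hL : ∀ x, L x = ∑ k, (σ k * B (v k) x) • u k) {x : M} (hx : ∀ k, B (v k) x = 0) : L x = 0 := by
  simp [hL, hx]

theorem range_eq_span_of_orthonormal [Fintype ι] [DecidableEq ι]
    (hL : ∀ x, L x = ∑ k, (σ k * B (v k) x) • u k)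
    (hv : ∀ k l, B (v k) (v l) = if k = l then 1 else 0) (hσ : ∀ k, σ k ≠ 0) :
    range L = Submodule.span K (Set.range u) := by
  apply le_antisymm
  · rintro _ ⟨x, rfl⟩
    rw [hL]
    exact Submodule.sum_mem _ fun k _ => Submodule.smul_mem _ _ (Submodule.subset_span ⟨k, rfl⟩)
  · rw [Submodule.span_le]
    rintro _ ⟨k, rfl⟩
    refine ⟨(σ k)⁻¹ • v k, ?_⟩
    rw [map_smul, map_eq_smul_of_orthonormal hL hv, smul_smul, inv_mul_cancel₀ (hσ k), one_smul]

end LinearMap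

def finnerBilin : Matrix (Fin 3) (Fin 3) ℝ →ₗ[ℝ] Matrix (Fin 3) (Fin 3) ℝ →ₗ[ℝ] ℝ :=
  LinearMap.mk₂ ℝ finner
    (fun _ _ _ => by simp [finner, add_mul, Finset.sum_add_distrib])
    (fun _ _ _ => by simp [finner, mul_assoc, Finset.mul_sum])
    (fun _ _ _ => by simp [finner, mul_add, Finset.sum_add_distrib])
    (fun _ _ _ => by simp [finner, mul_left_comm, Finset.mul_sum])

@[simp]
theorem finnerBilin_apply (A B : Matrix (Fin 3) (Fin 3) ℝ) : finnerBilin A B = finner A B := rfl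

noncomputable def rightSingularVector : Fin 3 → Matrix (Fin 3) (Fin 3) ℝ :=
  (√2)⁻¹ • ![!![0, -1, 0; 1, 0, 0; 0, 0, 0], !![0, 0, 1; 0, 0, 0; 1, 0, 0],
    !![0, 0, 0; 0, 0, 1; 0, 1, 0]]

noncomputable def leftSingularVector : Fin 3 → Matrix (Fin 3) (Fin 3) ℝ :=
  (√2)⁻¹ • ![!![0, 1, 0; -1, 0, 0; 0, 0, 0], !![0, 0, -1; 0, 0, 0; 1, 0, 0],
    !![0, 0, 0; 0, 0, -1; 0, 1, 0]]

theorem finner_rightSingularVector (k l : Fin 3) :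
    finner (rightSingularVector k) (rightSingularVector l) = if k = l then 1 else 0 := by
  fin_cases k <;> fin_cases l <;>
    simp [finner, rightSingularVector, Fin.sum_univ_three] <;> ring_nf <;> norm_num

theorem finner_leftSingularVector (k l : Fin 3) :
    finner (leftSingularVector k) (leftSingularVector l) = if k = l then 1 else 0 := by
  fin_cases k <;> fin_cases l <;>
    simp [finner, leftSingularVector, Fin.sum_univ_three] <;> ring_nf <;> norm_num

noncomputable def singularValues (s : Fin 3 → ℝ) : Fin 3 → ℝ :=
  ![2 / (s 0 + s 1), 2 / (s 0 + s 2), 2 / (s 1 + s 2)]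

theorem singularValues_ne_zero {s : Fin 3 → ℝ} (hpos : ∀ i, 0 < s i) (k : Fin 3) :
    singularValues s k ≠ 0 := by
  have := hpos 0; have := hpos 1; have := hpos 2
  fin_cases k <;> simp [singularValues] <;> linarith

noncomputable def negDetJacobian (s : Fin 3 → ℝ) (P : Matrix (Fin 3) (Fin 3) ℝ) :
    Matrix (Fin 3) (Fin 3) ℝ :=
  !![0, (P 1 0 - P 0 1) / (s 0 + s 1), -(P 0 2 + P 2 0) / (s 0 + s 2);
     -((P 1 0 - P 0 1) / (s 0 + s 1)), 0, -(P 1 2 + P 2 1) / (s 1 + s 2);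
     (P 0 2 + P 2 0) / (s 0 + s 2), (P 1 2 + P 2 1) / (s 1 + s 2), 0]

theorem negDetJacobian_eq_sum (s : Fin 3 → ℝ) (P : Matrix (Fin 3) (Fin 3) ℝ) :
    negDetJacobian s P =
      ∑ k, (singularValues s k * finnerBilin (rightSingularVector k) P) •
        leftSingularVector k := by
  ext i j
  fin_cases i <;> fin_cases j <;>
    simp [negDetJacobian, singularValues, finner, rightSingularVector, leftSingularVector,
      Fin.sum_univ_three] <;> ring_nf <;> simp

theorem svd_neg_det_jacobian_spectrum_general
    (s : Fin 3 → ℝ) (hpos : ∀ i, 0 < s i)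
    (L : Matrix (Fin 3) (Fin 3) ℝ →ₗ[ℝ] Matrix (Fin 3) (Fin 3) ℝ)
    (hL : ∀ P : Matrix (Fin 3) (Fin 3) ℝ,
      L P = !![0, (P 1 0 - P 0 1) / (s 0 + s 1), -(P 0 2 + P 2 0) / (s 0 + s 2);
               -((P 1 0 - P 0 1) / (s 0 + s 1)), 0, -(P 1 2 + P 2 1) / (s 1 + s 2);
               (P 0 2 + P 2 0) / (s 0 + s 2), (P 1 2 + P 2 1) / (s 1 + s 2), 0]) :
    Module.finrank ℝ (LinearMap.range L) = 3 ∧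
    ∃ v u : Fin 3 → Matrix (Fin 3) (Fin 3) ℝ,
      (∀ k l, finner (v k) (v l) = if k = l then 1 else 0) ∧
      (∀ k l, finner (u k) (u l) = if k = l then 1 else 0) ∧
      (∀ k, L (v k)
        = (![2 / (s 0 + s 1), 2 / (s 0 + s 2), 2 / (s 1 + s 2)] k) • u k) ∧
      (∀ P : Matrix (Fin 3) (Fin 3) ℝ, (∀ k, finner (v k) P = 0) → L P = 0) := by
  have hsum (P) : L P =
      ∑ k, (singularValues s k * finnerBilin (rightSingularVector k) P) • leftSingularVector k :=
    (hL P).trans (negDetJacobian_eq_sum s P)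
  refine ⟨?_, rightSingularVector, leftSingularVector, finner_rightSingularVector,
    finner_leftSingularVector,
    LinearMap.map_eq_smul_of_orthonormal hsum finner_rightSingularVector,
    fun P => LinearMap.map_eq_zero_of_orthogonal hsum⟩
  rw [LinearMap.range_eq_span_of_orthonormal hsum finner_rightSingularVector
    (singularValues_ne_zero hpos)]
  exact (finrank_span_eq_card (LinearMap.linearIndependent_of_orthonormal (B := finnerBilin)
    finner_leftSingularVector)).trans (Fintype.card_fin 3)

/-- The `det < 0` SVD Jacobian (in the SVD frame): the linear map
`L⁻ : P ↦ Ψ` with `Ψ₁₂ = (P₂₁ − P₁₂)/(s₁+s₂)`, `Ψ₁₃ = −(P₁₃ + P₃₁)/(s₁+s₃)`,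
`Ψ₂₃ = −(P₂₃ + P₃₂)/(s₂+s₃)`, `Ψ` antisymmetric and zero on the diagonal,
for `s₁ > s₂ > s₃ > 0`, has rank 3 and its nonzero singular values with respect
to the Frobenius inner product are `2/(s₁+s₂)`, `2/(s₁+s₃)`, `2/(s₂+s₃)` —
identical to those of the `det > 0` case. -/
theorem svd_neg_det_jacobian_spectrum
    (s : Fin 3 → ℝ) (hpos : ∀ i, 0 < s i)
    (hord : s 1 < s 0 ∧ s 2 < s 1)
    (L : Matrix (Fin 3) (Fin 3) ℝ →ₗ[ℝ] Matrix (Fin 3) (Fin 3) ℝ)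
    (hL : ∀ P : Matrix (Fin 3) (Fin 3) ℝ,
      L P = !![0, (P 1 0 - P 0 1) / (s 0 + s 1), -(P 0 2 + P 2 0) / (s 0 + s 2);
               -((P 1 0 - P 0 1) / (s 0 + s 1)), 0, -(P 1 2 + P 2 1) / (s 1 + s 2);
               (P 0 2 + P 2 0) / (s 0 + s 2), (P 1 2 + P 2 1) / (s 1 + s 2), 0]) :
    Module.finrank ℝ (LinearMap.range L) = 3 ∧
    ∃ v u : Fin 3 → Matrix (Fin 3) (Fin 3) ℝ,
      (∀ k l, finner (v k) (v l) = if k = l then 1 else 0) ∧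
      (∀ k l, finner (u k) (u l) = if k = l then 1 else 0) ∧
      (∀ k, L (v k)
        = (![2 / (s 0 + s 1), 2 / (s 0 + s 2), 2 / (s 1 + s 2)] k) • u k) ∧
      (∀ P : Matrix (Fin 3) (Fin 3) ℝ, (∀ k, finner (v k) P = 0) → L P = 0) :=
  svd_neg_det_jacobian_spectrum_general s hpos L hL
end
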